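/- arXiv:1910.05971 — 7 statements merged into one kernel-verified Lean document; each statement's English description precedes it below -/
import Mathlib

section
/- Grandparent hooking preserves connectivity correctness: if every vertex w satisfies G.Reachable w (f w), and (u,v) is an edge of G, then replacing the parent of f(u) by the grandparent f(f(v)) (i.e., setting f'(f(u)) = f(f(v)) and f' = f elsewhere) preserves the invariant that every vertex is reachable from its parent in G. -/
namespace SimpleGraph

variable {V : Type*} [DecidableEq V] {G : SimpleGraph V}

theorem reachable_update_of_forall_reachable {f : V → V} (hf : ∀ w, G.Reachable w (f w))
    {a b : V} (hab : G.Reachable a b) (w : V) : G.Reachable w (Function.update f a b w) := by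
  rcases eq_or_ne w a with rfl | hne
  · rwa [Function.update_self]
  · rw [Function.update_of_ne hne]
    exact hf w

end SimpleGraph

/-- Grandparent hooking preserves connectivity correctness: updating the parent
of `f u` to the grandparent `f (f v)` for an edge `(u,v)` preserves the
invariant that every vertex is reachable from its parent. -/
theorem grandparent_hooking_preserves_reachability {n : ℕ}
    (G : SimpleGraph (Fin n)) (f : Fin n → Fin n)
    (hreach : ∀ w, G.Reachable w (f w))
    (u v : Fin n) (hadj : G.Adj u v) :
    ∀ w, G.Reachable w (Function.update f (f u) (f (f v)) w) := by
  have hparent_grandparent : G.Reachable (f u) (f (f v)) :=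
    (hreach u).symm.trans <| hadj.reachable.trans <| (hreach v).trans (hreach (f v))
  exact SimpleGraph.reachable_update_of_forall_reachable hreach hparent_grandparent
end

section
/- Stochastic hooking preserves both the order invariant and connectivity: if f(w) ≤ w for all w and G.Reachable w (f w) for all w, and (u,v) ∈ E(G) with f(f(v)) < f(f(u)), then the update f'(f(u)) = min(f(f(u)), f(f(v))), f' = f elsewhere, satisfies f'(w) ≤ w and G.Reachable w (f' w) for all w, even when f(u) is not a root. -/
/-! The only value that changes is the one at `f u`, and the new value `min (f (f u)) (f (f v))`
satisfies both invariants there: it is at most `f (f u) ≤ f u`, and it is reachable from `f u`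
because both candidates are, `f (f v)` along `f u ~ u — v ~ f v ~ f (f v)`. -/

theorem Function.forall_rel_update {α β : Type*} [DecidableEq α] (R : α → β → Prop)
    {f : α → β} (hf : ∀ a, R a (f a)) {x : α} {y : β} (hy : R x y) :
    ∀ a, R a (Function.update f x y a) :=
  (Function.forall_update_iff f R).2 ⟨hy, fun a _ ↦ hf a⟩

theorem stochastic_hooking_preserves_invariants_general {n : ℕ}
    (G : SimpleGraph (Fin n)) (f : Fin n → Fin n)
    (hle : ∀ w, f w ≤ w)
    (hreach : ∀ w, G.Reachable w (f w))
    (u v : Fin n) (hadj : G.Adj u v) :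
    (∀ w, Function.update f (f u) (min (f (f u)) (f (f v))) w ≤ w) ∧
    (∀ w, G.Reachable w (Function.update f (f u) (min (f (f u)) (f (f v))) w)) := by
  have hroot : G.Reachable (f u) (f (f u)) := hreach (f u)
  have hother : G.Reachable (f u) (f (f v)) :=
    (hreach u).symm.trans <| hadj.reachable.trans <| (hreach v).trans (hreach (f v))
  exact ⟨Function.forall_rel_update (fun w y ↦ y ≤ w) hle ((min_le_left _ _).trans (hle _)),
    Function.forall_rel_update G.Reachable hreach (min_rec' _ hroot hother)⟩

/-- Stochastic hooking preserves both the order invariant and connectivity: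
for an edge `(u,v)` with `f (f v) < f (f u)`, updating the value at `f u` to
`min (f (f u)) (f (f v))` keeps `f' w ≤ w` and `G.Reachable w (f' w)` for all
`w`, even when `f u` is not a root. -/
theorem stochastic_hooking_preserves_invariants {n : ℕ}
    (G : SimpleGraph (Fin n)) (f : Fin n → Fin n)
    (hle : ∀ w, f w ≤ w)
    (hreach : ∀ w, G.Reachable w (f w))
    (u v : Fin n) (hadj : G.Adj u v) (hlt : f (f v) < f (f u)) :
    (∀ w, Function.update f (f u) (min (f (f u)) (f (f v))) w ≤ w) ∧
    (∀ w, G.Reachable w (Function.update f (f u) (min (f (f u)) (f (f v))) w)) :=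
  stochastic_hooking_preserves_invariants_general G f hle hreach u v hadj
end

section
/- In FastSV, if the grandparent function f∘f remains unchanged after one full iteration, then every vertex points to a root: f(f(u)) = f(u) for all u. -/
/-- Since `f'` only decreases, `f' (f' u) ≤ f' u ≤ f (f u)`; an unchanged grandparent makes
both inequalities equalities. -/
theorem eq_grandparent_of_grandparent_stable {α : Type*} [PartialOrder α] {f f' : α → α}
    (hdesc : ∀ w, f' w ≤ w) (hshort : ∀ u, f' u ≤ f (f u))
    (hgp : ∀ u, f' (f' u) = f (f u)) (u : α) : f' u = f (f u) :=
  (hshort u).antisymm (hgp u ▸ hdesc (f' u))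

theorem fastsv_grandparent_stable_implies_star_general {n : ℕ}
    (f f' : Fin n → Fin n)
    (hle : ∀ w, f w ≤ w)
    (hstart : ∀ w, f' w ≤ f w)
    (hshort : ∀ u, f' u ≤ f (f u))
    (hgp : ∀ u, f' (f' u) = f (f u)) :
    ∀ u, f' (f' u) = f' u := by
  intro u
  have hdesc : ∀ w, f' w ≤ w := fun w => (hstart w).trans (hle w)
  rw [hgp u, eq_grandparent_of_grandparent_stable hdesc hshort hgp u]

/-- In FastSV, if the grandparent function is unchanged by one full iteration
(stochastic hooking, aggressive hooking and shortcutting, all performed as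
min-assignments starting from `f' = f`), then every vertex points to a root:
`f' (f' u) = f' u` for all `u`. -/
theorem fastsv_grandparent_stable_implies_star {n : ℕ}
    (G : SimpleGraph (Fin n)) (f f' : Fin n → Fin n)
    (hle : ∀ w, f w ≤ w)
    (hstart : ∀ w, f' w ≤ f w)
    (hstoch : ∀ u v, G.Adj u v → f' (f u) ≤ f (f v))
    (haggr : ∀ u v, G.Adj u v → f' u ≤ f (f v))
    (hshort : ∀ u, f' u ≤ f (f u))
    (hgp : ∀ u, f' (f' u) = f (f u)) :
    ∀ u, f' (f' u) = f' u :=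
  fastsv_grandparent_stable_implies_star_general f f' hle hstart hshort hgp
end

section
/- In FastSV, if after an iteration the grandparent f∘f remains unchanged, then every vertex hooked onto its own grandparent: the new parent f'(u) equals f(f(u)) for all u. -/
theorem eq_apply_apply_of_apply_apply_eq {α : Type*} [PartialOrder α] {f f' : α → α}
    (hle : ∀ w, f w ≤ w) (hshort : ∀ w, f' w ≤ f (f w)) {u : α}
    (hgp : f' (f' u) = f (f u)) : f' u = f (f u) :=
  le_antisymm (hshort u) <| calc
    f (f u) = f' (f' u) := hgp.symm
    _ ≤ f (f (f' u)) := hshort _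
    _ ≤ f (f' u) := hle _
    _ ≤ f' u := hle _

/-- In FastSV, if the grandparents are unchanged after an iteration, then every
vertex hooked onto its own grandparent: `f' u = f (f u)` for all `u`. -/
theorem fastsv_hooks_to_grandparent {n : ℕ}
    (f f' : Fin n → Fin n)
    (hle : ∀ w, f w ≤ w)
    (hshort : ∀ w, f' w ≤ f (f w))
    (hgp : ∀ u, f' (f' u) = f (f u)) :
    ∀ u, f' u = f (f u) :=
  fun _ => eq_apply_apply_of_apply_apply_eq hle hshort (hgp _)
end

section
/- Correctness of early termination in FastSV: if the grandparent vector f∘f remains unchanged after a full FastSV iteration, then the parent vector f remains unchanged in all subsequent iterations; in particular f is already the final answer up to one more shortcut. -/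
/-!
If `f' ∘ f' = f ∘ f` for `f' = fastSVStep G f`, then `f'` maps every vertex to a root
(`f' u ≤ f (f u) = f' (f' u) ≤ f' u`), and the aggressive hooking of the first iteration
gives `f' u ≤ f (f v) = f' v` along every edge. For such a star forest that is
monotone along edges, every candidate of every min-assignment is at least the old
parent, so a further iteration changes nothing.
-/

open Classical in
/-- One full FastSV iteration on graph `G` applied to parent vector `h`:
each entry `u` of the result is the minimum of its old value `h u`, the
shortcut value `h (h u)`, the aggressive-hooking contributions `h (h v)`
for neighbors `v` of `u`, and the stochastic-hooking contributions `h (h v)`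
for edges `(x,v)` with `h x = u`. -/
noncomputable def fastSVStep {n : ℕ} (G : SimpleGraph (Fin n))
    (h : Fin n → Fin n) : Fin n → Fin n := fun u =>
  (insert (h u) (insert (h (h u))
      ((Finset.univ.filter fun v => G.Adj u v).image (fun v => h (h v)) ∪
       (Finset.univ.filter fun v => ∃ x, G.Adj x v ∧ h x = u).image
         (fun v => h (h v))))).min'
    (Finset.insert_nonempty _ _)

variable {n : ℕ} {G : SimpleGraph (Fin n)} {h : Fin n → Fin n}

open Classical in
theorem le_fastSVStep_iff {u b : Fin n} :
    b ≤ fastSVStep G h u ↔ b ≤ h u ∧ b ≤ h (h u) ∧ (∀ v, G.Adj u v → b ≤ h (h v)) ∧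
      ∀ v x, G.Adj x v → h x = u → b ≤ h (h v) := by
  simp only [fastSVStep, Finset.le_min'_iff, Finset.forall_mem_insert, Finset.forall_mem_union,
    Finset.forall_mem_image, Finset.mem_filter, Finset.mem_univ, true_and,
    forall_exists_index, and_imp]

theorem fastSVStep_apply_le (u : Fin n) : fastSVStep G h u ≤ h u :=
  (le_fastSVStep_iff.1 le_rfl).1

theorem fastSVStep_apply_le_apply_apply (u : Fin n) : fastSVStep G h u ≤ h (h u) :=
  (le_fastSVStep_iff.1 le_rfl).2.1

theorem fastSVStep_apply_le_of_adj {u v : Fin n} (huv : G.Adj u v) :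
    fastSVStep G h u ≤ h (h v) :=
  (le_fastSVStep_iff.1 le_rfl).2.2.1 v huv

theorem fastSVStep_eq_self (hroot : ∀ u, h (h u) = h u)
    (hedge : ∀ u v, G.Adj u v → h u ≤ h v) : fastSVStep G h = h := by
  funext u
  refine le_antisymm (fastSVStep_apply_le u) (le_fastSVStep_iff.2 ⟨le_rfl, ?_, ?_, ?_⟩)
  · rw [hroot]
  · intro v huv
    rw [hroot]
    exact hedge u v huv
  · rintro v x hxv rfl
    rw [hroot, hroot]
    exact hedge x v hxv

section GrandparentFixed

variable (hle : ∀ w, h w ≤ w) (hgp : ∀ w, fastSVStep G h (fastSVStep G h w) = h (h w))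
include hle hgp

theorem fastSVStep_apply_fastSVStep (u : Fin n) :
    fastSVStep G h (fastSVStep G h u) = fastSVStep G h u :=
  le_antisymm ((fastSVStep_apply_le _).trans (hle _))
    (hgp u ▸ fastSVStep_apply_le_apply_apply u)

theorem fastSVStep_apply_le_fastSVStep_apply_of_adj {u v : Fin n} (huv : G.Adj u v) :
    fastSVStep G h u ≤ fastSVStep G h v :=
  calc fastSVStep G h u ≤ h (h v) := fastSVStep_apply_le_of_adj huv
    _ = fastSVStep G h (fastSVStep G h v) := (hgp v).symm
    _ = fastSVStep G h v := fastSVStep_apply_fastSVStep hle hgp v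

end GrandparentFixed

/-- Correctness of early termination in FastSV: if one FastSV iteration maps
`f` to `f'` and the grandparent vector is unchanged (`f' ∘ f' = f ∘ f`), then
the parent vector remains unchanged by all subsequent iterations. -/
theorem fastsv_early_termination {n : ℕ}
    (G : SimpleGraph (Fin n)) (f f' : Fin n → Fin n)
    (hle : ∀ w, f w ≤ w)
    (hstep : f' = fastSVStep G f)
    (hgp : f' ∘ f' = f ∘ f) :
    fastSVStep G f' = f' := by
  subst hstep
  have hgp' (w : Fin n) := congrFun hgp w
  exact fastSVStep_eq_self (fastSVStep_apply_fastSVStep hle hgp')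
    fun _ _ huv => fastSVStep_apply_le_fastSVStep_apply_of_adj hle hgp' huv
end

section
/- For a pointer function f : Fin n → Fin n with f(u) ≤ u for all u, shortcutting at least halves the distance to the root: if u requires k ≥ 2 applications of f to reach its root, then under g := f∘f the vertex u requires at most ⌈k/2⌉ applications of g to reach the same root. -/
theorem Function.iterate_eq_of_le_of_fixed {α : Type*} {f : α → α} {x : α} {k m : ℕ}
    (hfix : f (f^[k] x) = f^[k] x) (hkm : k ≤ m) : f^[m] x = f^[k] x := by
  obtain ⟨d, rfl⟩ := Nat.exists_eq_add_of_le hkm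
  rw [add_comm, Function.iterate_add_apply, Function.iterate_fixed hfix]

theorem Function.iterate_comp_self {α : Type*} (f : α → α) (j : ℕ) :
    (f ∘ f)^[j] = f^[2 * j] :=
  (Function.iterate_mul f 2 j).symm

theorem shortcut_halves_depth_general {n : ℕ} (f : Fin n → Fin n)
    (u : Fin n) (k : ℕ)
    (hroot : f (f^[k] u) = f^[k] u) :
    (f ∘ f)^[(k + 1) / 2] u = f^[k] u := by
  rw [Function.iterate_comp_self]
  exact Function.iterate_eq_of_le_of_fixed hroot (by omega)

/-- Shortcutting at least halves the distance to the root: if `u` needs exactly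
`k ≥ 2` applications of `f` to reach its root, then under `g = f ∘ f` it needs
at most `⌈k/2⌉` applications to reach the same root. -/
theorem shortcut_halves_depth {n : ℕ} (f : Fin n → Fin n)
    (hle : ∀ u, f u ≤ u) (u : Fin n) (k : ℕ) (hk : 2 ≤ k)
    (hroot : f (f^[k] u) = f^[k] u)
    (hmin : ∀ j, j < k → f (f^[j] u) ≠ f^[j] u) :
    (f ∘ f)^[(k + 1) / 2] u = f^[k] u :=
  shortcut_halves_depth_general f u k hroot
end

section
/- Iterated shortcutting alone converges in at most ⌈log₂(n)⌉ + 1 rounds: starting from any f : Fin n → Fin n with f(u) ≤ u, repeatedly replacing f by f∘f yields, after at most ⌈log₂ n⌉ + 1 rounds, a function h with h∘h = h, and h(u) is the root (fixed point) reached from u under the original f. -/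
/-! Round `i` of shortcutting computes `f^[2 ^ i]`. Each step of an `f`-orbit either stays at a
fixed point or strictly decreases the value, so the orbit of `u` is fixed after `u < n ≤ 2 ^ i`
steps. -/

open Function

theorem iterate_comp_self_iterate {α : Type*} (g : α → α) (i : ℕ) :
    (fun F : α → α => F ∘ F)^[i] g = g^[2 ^ i] := by
  induction i generalizing g with
  | zero => rfl
  | succ i ih => rw [iterate_succ_apply, ih, pow_succ', iterate_mul]; rfl

theorem isFixedPt_iterate_of_measure_le {α : Type*} {f : α → α} (μ : α → ℕ)
    (hμ : ∀ u, f u = u ∨ μ (f u) < μ u) {m : ℕ} {u : α} (hu : μ u ≤ m) :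
    IsFixedPt f (f^[m] u) := by
  induction m generalizing u with
  | zero => exact (hμ u).resolve_right (by omega)
  | succ m ih =>
    rcases hμ u with hfix | hlt
    · rwa [iterate_fixed hfix]
    · exact ih (by omega)

/-- Iterated shortcutting converges in at most `⌈log₂ n⌉ + 1` rounds: starting
from `f : Fin n → Fin n` with `f u ≤ u` and repeatedly replacing `f` by
`f ∘ f`, any round `i` with `n ≤ 2 ^ i` yields an idempotent function `h`
whose value at `u` is the fixed point of `f` eventually reached from `u`. -/
theorem iterated_shortcut_converges {n : ℕ} (f : Fin n → Fin n)
    (hle : ∀ u, f u ≤ u) (i : ℕ) (hi : n ≤ 2 ^ i) :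
    let h := (fun F : Fin n → Fin n => F ∘ F)^[i] f
    (h ∘ h = h) ∧ ∀ u, (∃ k, h u = f^[k] u) ∧ f (h u) = h u := by
  intro h
  have hh : h = f^[2 ^ i] := iterate_comp_self_iterate f i
  have hroot (u : Fin n) : IsFixedPt f (h u) :=
    hh ▸ isFixedPt_iterate_of_measure_le Fin.val (fun v => (hle v).eq_or_lt.imp id Fin.lt_def.mp)
      (u.isLt.trans_le hi).le
  have hidem (u : Fin n) : h (h u) = h u := (congrFun hh (h u)).trans ((hroot u).iterate _)
  exact ⟨funext hidem, fun u => ⟨⟨2 ^ i, congrFun hh u⟩, hroot u⟩⟩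
end
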